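/- The equation √2·tan(√2·y) = -tan(y) has a unique solution y in the open interval (π/(2√2), π/2). -/

import Mathlib

open Real Filter Set Topology

noncomputable def gfun (y : ℝ) : ℝ :=
  Real.sqrt 2 * Real.tan (Real.sqrt 2 * y - π) + Real.tan y

lemma sqrt2_pos : (0:ℝ) < Real.sqrt 2 := Real.sqrt_pos.mpr (by norm_num)

lemma sqrt2_lt_two : Real.sqrt 2 < 2 := by
  nlinarith [Real.sq_sqrt (by norm_num : (2:ℝ) ≥ 0), Real.sqrt_nonneg 2]

lemma sqrt2_mul_a : Real.sqrt 2 * (π / (2 * Real.sqrt 2)) = π / 2 := by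
  have h := sqrt2_pos
  field_simp

lemma a_lt_b : π / (2 * Real.sqrt 2) < π / 2 := by
  have hπ := Real.pi_pos
  have h := sqrt2_pos
  apply div_lt_div_of_pos_left hπ (by norm_num)
  nlinarith [sqrt2_pos, sqrt2_lt_two, Real.sq_sqrt (by norm_num : (2:ℝ) ≥ 0)]

lemma mem1 {y : ℝ} (hy : y ∈ Ioo (π / (2 * Real.sqrt 2)) (π / 2)) :
    y ∈ Ioo (-(π / 2)) (π / 2) := by
  have hπ := Real.pi_pos
  have ha : (0:ℝ) < π / (2 * Real.sqrt 2) := by positivity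
  exact ⟨by linarith [hy.1], hy.2⟩

lemma mem2 {y : ℝ} (hy : y ∈ Ioo (π / (2 * Real.sqrt 2)) (π / 2)) :
    Real.sqrt 2 * y - π ∈ Ioo (-(π / 2)) (π / 2) := by
  have hπ := Real.pi_pos
  have h1 : Real.sqrt 2 * (π / (2 * Real.sqrt 2)) < Real.sqrt 2 * y :=
    mul_lt_mul_of_pos_left hy.1 sqrt2_pos
  rw [sqrt2_mul_a] at h1
  have h2 : Real.sqrt 2 * y < Real.sqrt 2 * (π / 2) :=
    mul_lt_mul_of_pos_left hy.2 sqrt2_pos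
  have h3 : Real.sqrt 2 * (π / 2) < 2 * (π / 2) :=
    mul_lt_mul_of_pos_right sqrt2_lt_two (by positivity)
  constructor <;> [linarith; nlinarith]

lemma gmono : StrictMonoOn gfun (Ioo (π / (2 * Real.sqrt 2)) (π / 2)) := by
  intro x hx y hy hxy
  have h1 : Real.sqrt 2 * x - π < Real.sqrt 2 * y - π := by
    have := mul_lt_mul_of_pos_left hxy sqrt2_pos; linarith
  have t1 := Real.strictMonoOn_tan (mem2 hx) (mem2 hy) h1
  have t2 := Real.strictMonoOn_tan (mem1 hx) (mem1 hy) hxy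
  have := mul_lt_mul_of_pos_left t1 sqrt2_pos
  unfold gfun; linarith

lemma gcont : ContinuousOn gfun (Ioo (π / (2 * Real.sqrt 2)) (π / 2)) := by
  intro y hy
  have c1 : ContinuousAt Real.tan (Real.sqrt 2 * y - π) :=
    Real.continuousAt_tan.mpr (ne_of_gt (Real.cos_pos_of_mem_Ioo (mem2 hy)))
  have c2 : ContinuousAt Real.tan y :=
    Real.continuousAt_tan.mpr (ne_of_gt (Real.cos_pos_of_mem_Ioo (mem1 hy)))
  have hlin : ContinuousAt (fun x : ℝ => Real.sqrt 2 * x - π) y := by fun_prop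
  have ctan : ContinuousAt (Real.tan ∘ fun x : ℝ => Real.sqrt 2 * x - π) y :=
    ContinuousAt.comp (f := fun x : ℝ => Real.sqrt 2 * x - π) (x := y) c1 hlin
  have cmul : ContinuousAt (fun x : ℝ => Real.sqrt 2 * Real.tan (Real.sqrt 2 * x - π)) y :=
    continuousAt_const.mul ctan
  have : ContinuousAt gfun y := cmul.add c2
  exact this.continuousWithinAt

lemma gbot : Tendsto gfun (𝓝[>] (π / (2 * Real.sqrt 2))) atBot := by
  set a := π / (2 * Real.sqrt 2) with ha
  have hlin : Tendsto (fun y => Real.sqrt 2 * y - π) (𝓝[>] a) (𝓝[>] (-(π / 2))) := by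
    apply tendsto_nhdsWithin_of_tendsto_nhds_of_eventually_within
    · have : Tendsto (fun y => Real.sqrt 2 * y - π) (𝓝 a) (𝓝 (Real.sqrt 2 * a - π)) :=
        ((continuous_const.mul continuous_id).sub continuous_const).tendsto a
      rw [ha, sqrt2_mul_a] at this
      convert this.mono_left nhdsWithin_le_nhds using 2
      ring
    · filter_upwards [self_mem_nhdsWithin] with y (hy : a < y)
      have := mul_lt_mul_of_pos_left hy sqrt2_pos
      rw [ha, sqrt2_mul_a] at this
      simp only [Set.mem_Ioi]; linarith
  have t2 : Tendsto (fun y => Real.tan (Real.sqrt 2 * y - π)) (𝓝[>] a) atBot :=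
    Real.tendsto_tan_neg_pi_div_two.comp hlin
  have t3 : Tendsto (fun y => Real.sqrt 2 * Real.tan (Real.sqrt 2 * y - π)) (𝓝[>] a) atBot :=
    t2.const_mul_atBot sqrt2_pos
  have c2 : ContinuousAt Real.tan a := by
    apply Real.continuousAt_tan.mpr
    apply ne_of_gt
    apply Real.cos_pos_of_mem_Ioo
    have hπ := Real.pi_pos
    have ha0 : (0:ℝ) < a := by rw [ha]; positivity
    exact ⟨by linarith, by rw [ha]; exact a_lt_b⟩
  have t4 : Tendsto Real.tan (𝓝[>] a) (𝓝 (Real.tan a)) :=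
    c2.continuousWithinAt
  exact t3.atBot_add t4

lemma gtop : Tendsto gfun (𝓝[<] (π / 2)) atTop := by
  have hb : (π / 2) ∈ Ioo (-(π / 2)) (π / 2 + 1) := by
    constructor <;> nlinarith [Real.pi_pos]
  have t1 : Tendsto Real.tan (𝓝[<] (π / 2)) atTop := Real.tendsto_tan_pi_div_two
  have hmem : Real.sqrt 2 * (π / 2) - π ∈ Ioo (-(π / 2)) (π / 2) := by
    have hπ := Real.pi_pos
    have h1 : Real.sqrt 2 * (π / 2) < 2 * (π / 2) :=
      mul_lt_mul_of_pos_right sqrt2_lt_two (by positivity)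
    have h2 : 1 * (π / 2) < Real.sqrt 2 * (π / 2) := by
      apply mul_lt_mul_of_pos_right _ (by positivity)
      nlinarith [Real.sq_sqrt (by norm_num : (2:ℝ) ≥ 0), Real.sqrt_nonneg 2]
    constructor <;> nlinarith
  have c1 : ContinuousAt Real.tan (Real.sqrt 2 * (π / 2) - π) :=
    Real.continuousAt_tan.mpr (ne_of_gt (Real.cos_pos_of_mem_Ioo hmem))
  have hlin : ContinuousAt (fun y : ℝ => Real.sqrt 2 * y - π) (π / 2) := by fun_prop
  have ctan : ContinuousAt (Real.tan ∘ fun y : ℝ => Real.sqrt 2 * y - π) (π / 2) :=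
    ContinuousAt.comp (f := fun y : ℝ => Real.sqrt 2 * y - π) (x := π / 2) c1 hlin
  have t2 : Tendsto (fun y => Real.sqrt 2 * Real.tan (Real.sqrt 2 * y - π)) (𝓝[<] (π / 2))
      (𝓝 (Real.sqrt 2 * Real.tan (Real.sqrt 2 * (π / 2) - π))) := by
    have cmul : ContinuousAt (fun x : ℝ => Real.sqrt 2 * Real.tan (Real.sqrt 2 * x - π))
        (π / 2) := continuousAt_const.mul ctan
    exact cmul.continuousWithinAt
  exact t2.add_atTop t1

lemma gzero : gfun y = 0 ↔
    Real.sqrt 2 * Real.tan (Real.sqrt 2 * y) = - Real.tan y := by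
  unfold gfun
  rw [Real.tan_sub_pi]
  constructor <;> intro h <;> linarith

/-- The equation √2·tan(√2·y) = -tan(y) has a unique solution in (π/(2√2), π/2). -/
theorem stmt2 : ∃! y : ℝ, y ∈ Set.Ioo (π / (2 * Real.sqrt 2)) (π / 2) ∧
    Real.sqrt 2 * Real.tan (Real.sqrt 2 * y) = - Real.tan y := by
  set a := π / (2 * Real.sqrt 2) with ha
  set b := π / 2 with hb
  have hab : a < b := a_lt_b
  -- find y1 with gfun y1 < 0
  have hmemA : Ioo a b ∈ 𝓝[>] a := Ioo_mem_nhdsGT_of_mem ⟨le_refl a, hab⟩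
  have hmemB : Ioo a b ∈ 𝓝[<] b := Ioo_mem_nhdsLT_of_mem ⟨hab, le_refl b⟩
  obtain ⟨y1, hy1S, hy1⟩ :
      ∃ y, y ∈ Ioo a b ∧ gfun y < 0 := by
    have h1 : ∀ᶠ y in 𝓝[>] a, gfun y < 0 := gbot.eventually (eventually_lt_atBot 0)
    exact ((eventually_of_mem hmemA fun y hy => hy).and h1).exists
  obtain ⟨y2, hy2S, hy2⟩ :
      ∃ y, y ∈ Ioo a b ∧ 0 < gfun y := by
    have h1 : ∀ᶠ y in 𝓝[<] b, 0 < gfun y := gtop.eventually (eventually_gt_atTop 0)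
    exact ((eventually_of_mem hmemB fun y hy => hy).and h1).exists
  have h12 : y1 < y2 := by
    by_contra h
    push_neg at h
    rcases eq_or_lt_of_le h with h | h
    · rw [h] at hy2; linarith
    · have := gmono hy2S hy1S h; linarith
  have hsub : Icc y1 y2 ⊆ Ioo a b := fun z hz =>
    ⟨lt_of_lt_of_le hy1S.1 hz.1, lt_of_le_of_lt hz.2 hy2S.2⟩
  obtain ⟨y, hyI, hy0⟩ := intermediate_value_Icc (le_of_lt h12) (gcont.mono hsub)
    (Set.mem_Icc.mpr ⟨le_of_lt hy1, le_of_lt hy2⟩)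
  have hyS : y ∈ Ioo a b := hsub hyI
  refine ⟨y, ⟨hyS, gzero.mp hy0⟩, ?_⟩
  rintro z ⟨hzS, hzeq⟩
  have hz0 : gfun z = 0 := gzero.mpr hzeq
  exact gmono.injOn hzS hyS (by rw [hz0, hy0])
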